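/- For every m ≥ 1, in the path configuration H_m with nodes a — b — c — d having wakeup tags t_a = m, t_b = 0, t_c = 0, t_d = m+1, any deterministic anonymous leader election algorithm takes at least m rounds. Specifically: if the nodes b and c (which have identical histories while hearing only silence) first transmit in global round t < m, then nodes a and d are woken by these messages and have identical histories ever after, and b and c have identical histories ever after, so no leader can be elected. -/

import Mathlib

/-!
The reflection `Fin.rev` of the path `a — b — c — d` swaps `a ↔ d` and `b ↔ c` and maps
neighbourhoods to neighbourhoods, so by induction on rounds the histories stay invariant under
it: symmetric nodes hear the same multisets. The only asymmetry is `t_a = m ≠ m + 1 = t_d`,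
and it never acts, because `a` and `d` sleep exactly until round `tf < m`, when they are woken
by the identical first transmissions of `b` and `c`. As `Fin.rev` has no fixed point on `Fin 4`,
every decision function accepts `v` and `v.rev` together, so never exactly one node.
-/

def pathNbrs {n : ℕ} (v : Fin n) : Finset (Fin n) :=
  Finset.univ.filter fun u => v.val + 1 = u.val ∨ u.val + 1 = v.val

def heard {n : ℕ} {Msg σ : Type*} (act : σ → Option Msg) (X : Fin n → Option σ) (v : Fin n) :
    Multiset Msg :=
  (pathNbrs v).val.filterMap fun u => (X u).bind act

lemma pathNbrs_rev {n : ℕ} (v : Fin n) :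
    pathNbrs v.rev = (pathNbrs v).map Fin.revPerm.toEmbedding := by
  ext u
  rw [Finset.mem_map_equiv, Fin.revPerm_symm]
  simp only [pathNbrs, Finset.mem_filter, Finset.mem_univ, true_and, Fin.revPerm_apply,
    Fin.val_rev]
  omega

lemma heard_rev {n : ℕ} {Msg σ : Type*} (act : σ → Option Msg) {X : Fin n → Option σ}
    (hX : ∀ u, X u.rev = X u) (v : Fin n) : heard act X v.rev = heard act X v := by
  simp only [heard, pathNbrs_rev, Finset.map_val, Multiset.filterMap_map]
  congr 1
  funext u
  simp [hX]

lemma heard_zero_eq_zero_iff {Msg σ : Type*} (act : σ → Option Msg) (X : Fin 4 → Option σ) :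
    heard act X 0 = 0 ↔ (X 1).bind act = none := by
  have : pathNbrs (0 : Fin 4) = {1} := by decide
  rw [heard, this, Finset.singleton_val, ← Multiset.cons_zero]
  cases h : (X 1).bind act with
  | none => rw [Multiset.filterMap_cons_none (f := fun u => (X u).bind act) _ _ h]; simp
  | some x => rw [Multiset.filterMap_cons_some (fun u => (X u).bind act) 1 0 h]; simp

def wakeStep {Msg : Type*} [DecidableEq Msg] (t r : ℕ) (μ : Multiset Msg) :
    Option (List (Multiset Msg)) → Option (List (Multiset Msg)) :=
  Option.elim' (if μ ≠ 0 then some [μ] else if r = t then some [0] else none)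
    fun h => some (μ :: h)

section wakeStep

variable {Msg : Type*} [DecidableEq Msg] {t t' r : ℕ} {μ : Multiset Msg}
  {o : Option (List (Multiset Msg))}

lemma wakeStep_eq_none_iff : wakeStep t r μ o = none ↔ o = none ∧ μ = 0 ∧ r ≠ t := by
  cases o <;> by_cases hμ : μ = 0 <;> by_cases hr : r = t <;> simp [wakeStep, hμ, hr]

lemma wakeStep_congr_tag (h : t = t' ∨ (r ≠ t ∧ r ≠ t') ∨ o ≠ none) :
    wakeStep t r μ o = wakeStep t' r μ o := by
  rcases h with rfl | ⟨ht, ht'⟩ | ho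
  · rfl
  · cases o <;> simp [wakeStep, ht, ht']
  · obtain ⟨h, rfl⟩ := Option.ne_none_iff_exists'.mp ho
    rfl

end wakeStep

lemma not_existsUnique_of_fixedPointFree {α : Type*} {P : α → Prop} (σ : α → α)
    (hσ : ∀ a, σ a ≠ a) (hP : ∀ a, P a → P (σ a)) : ¬ ∃! a, P a := by
  rintro ⟨a, ha, huniq⟩
  exact hσ a (huniq _ (hP a ha))

section PathOfFour

variable {Msg : Type*} {m tf : ℕ} {tag : Fin 4 → ℕ}
  {act : List (Multiset Msg) → Option Msg} {H : ℕ → Fin 4 → Option (List (Multiset Msg))}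

lemma bind_act_eq_none_iff_lt (hquiet : ∀ r < tf, ∀ h, H r 1 = some h → act h = none)
    (htrans : ∃ h, H tf 1 = some h ∧ act h ≠ none) {r : ℕ} (hr : r ≤ tf) :
    (H r 1).bind act = none ↔ r < tf := by
  refine ⟨fun hnone => lt_of_le_of_ne hr ?_,
    fun hlt => Option.bind_eq_none_iff.mpr (hquiet r hlt)⟩
  rintro rfl
  obtain ⟨h, hh, hact⟩ := htrans
  simp [hh, hact] at hnone

lemma asleep_succ_iff [DecidableEq Msg] (htag : tag = ![m, 0, 0, m + 1]) (htf : tf < m)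
    (hstep : ∀ r v, H (r + 1) v = wakeStep (tag v) r (heard act (H r) v) (H r v))
    (hquiet : ∀ r < tf, ∀ h, H r 1 = some h → act h = none)
    (htrans : ∃ h, H tf 1 = some h ∧ act h ≠ none) {r : ℕ} (hasleep : H r 0 = none ↔ r ≤ tf) :
    H (r + 1) 0 = none ↔ r + 1 ≤ tf := by
  rw [hstep, wakeStep_eq_none_iff, hasleep, heard_zero_eq_zero_iff]
  have htag0 : tag 0 = m := by simp [htag]
  constructor
  · rintro ⟨hr, hsilent, -⟩
    exact (bind_act_eq_none_iff_lt hquiet htrans hr).mp hsilent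
  · intro hr
    exact ⟨by omega, (bind_act_eq_none_iff_lt hquiet htrans (by omega)).mpr hr, by omega⟩

lemma tag_rev_congr (htag : tag = ![m, 0, 0, m + 1]) {r : ℕ} (hmirror : ∀ v, H r v.rev = H r v)
    (hwake : H r 0 = none → r < m) (v : Fin 4) :
    tag v.rev = tag v ∨ (r ≠ tag v.rev ∧ r ≠ tag v) ∨ H r v ≠ none := by
  by_cases hr : r < m
  · fin_cases v <;> simp [htag] <;> omega
  · have h0 : H r 0 ≠ none := mt hwake hr
    have h3 : H r 3 ≠ none := (hmirror 0).trans_ne h0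
    fin_cases v <;> simp [htag, h0, h3]

lemma history_rev_succ [DecidableEq Msg] (htag : tag = ![m, 0, 0, m + 1])
    (hstep : ∀ r v, H (r + 1) v = wakeStep (tag v) r (heard act (H r) v) (H r v))
    {r : ℕ} (hmirror : ∀ v, H r v.rev = H r v) (hwake : H r 0 = none → r < m) (v : Fin 4) :
    H (r + 1) v.rev = H (r + 1) v := by
  rw [hstep, hstep, hmirror, heard_rev act hmirror]
  exact wakeStep_congr_tag (tag_rev_congr htag hmirror hwake v)

lemma history_rev_and_asleep_iff [DecidableEq Msg] (htag : tag = ![m, 0, 0, m + 1])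
    (htf : tf < m) (hH0 : ∀ v, H 0 v = none)
    (hstep : ∀ r v, H (r + 1) v = wakeStep (tag v) r (heard act (H r) v) (H r v))
    (hquiet : ∀ r < tf, ∀ h, H r 1 = some h → act h = none)
    (htrans : ∃ h, H tf 1 = some h ∧ act h ≠ none) (r : ℕ) :
    (∀ v, H r v.rev = H r v) ∧ (H r 0 = none ↔ r ≤ tf) := by
  induction r with
  | zero => simp [hH0]
  | succ r ih =>
    obtain ⟨hmirror, hasleep⟩ := ih
    exact ⟨history_rev_succ htag hstep hmirror fun h => (hasleep.mp h).trans_lt htf,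
      asleep_succ_iff htag htf hstep hquiet htrans hasleep⟩

end PathOfFour

theorem stmt14 {Msg : Type*} [DecidableEq Msg] (m : ℕ)
    (tag : Fin 4 → ℕ) (htag : tag = ![m, 0, 0, m + 1])
    (act : List (Multiset Msg) → Option Msg)
    (H : ℕ → Fin 4 → Option (List (Multiset Msg)))
    (msgs : ℕ → Fin 4 → Multiset Msg)
    (hmsgs : ∀ r v, msgs r v = Multiset.filterMap (fun u => (H r u).bind act)
      (Finset.univ.filter (fun u : Fin 4 => v.val + 1 = u.val ∨ u.val + 1 = v.val)).val)
    (hH0 : ∀ v, H 0 v = none)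
    (hHs : ∀ r v, H (r + 1) v =
      match H r v with
      | some h => some (msgs r v :: h)
      | none =>
        if msgs r v ≠ 0 then some [msgs r v]
        else if r = tag v then some [(0 : Multiset Msg)] else none)
    (tf : ℕ) (htf : tf < m)
    (hquiet : ∀ r < tf, ∀ h, H r 1 = some h → act h = none)
    (htrans : ∃ h, H tf 1 = some h ∧ act h ≠ none) :
    (∀ r, H r 0 = H r 3) ∧ (∀ r, H r 1 = H r 2) ∧
      ∀ (r : ℕ) (f : List (Multiset Msg) → Bool),
        ¬ ∃! v : Fin 4, ∃ h, H r v = some h ∧ f h = true := by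
  have hstep : ∀ r v, H (r + 1) v = wakeStep (tag v) r (heard act (H r) v) (H r v) := by
    intro r v
    rw [hHs, hmsgs]
    cases H r v <;> rfl
  have hmirror r := (history_rev_and_asleep_iff htag htf hH0 hstep hquiet htrans r).1
  refine ⟨fun r => (hmirror r 0).symm, fun r => (hmirror r 1).symm, fun r f => ?_⟩
  exact not_existsUnique_of_fixedPointFree Fin.rev (by decide)
    fun v ⟨h, hv, hf⟩ => ⟨h, (hmirror r v).trans hv, hf⟩
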